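/- arXiv:1805.07604 — 3 statements merged into one kernel-verified Lean document; each statement's English description precedes it below -/
import Mathlib

section
/- Let k₀ ∈ ℤ∖{0}, k₂ ∈ ℤ, ε ∈ {+1, −1}, and set k₁ = k₀ + k₂. Assume k₁ ≠ 0. Then k₀ + 2k₂ + ε·sgn(k₀) = 0 if and only if k₀ = 2k₁ + ε·sgn(k₁) and k₂ = −ε·sgn(k₁) − k₁. In other words, the resonant frequencies of the one-dimensional Zakharov system are exactly the pairs (k₀, k₂) = (2k₁ + ε·sgn(k₁), −ε·sgn(k₁) − k₁), k₁ ∈ ℤ∖{0}. -/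
/-! Substituting `k₂ = k₁ - k₀`, the resonance equation reads `k₀ = 2k₁ + ε sgn k₀`.
Since `|2k₁| ≥ 2` while `|ε sgn k₀| ≤ 1`, the right-hand side has the sign of `k₁`, so
`sgn k₀ = sgn k₁` on both sides of the equivalence and the two conditions coincide. -/

namespace Int

theorem abs_mul_sign_le_one {ε : ℤ} (hε : |ε| ≤ 1) (k : ℤ) : |ε * k.sign| ≤ 1 := by
  rcases sign_trichotomy k with h | h | h <;> simp [h, hε]

theorem sign_two_mul_add_of_abs_le_one {b c : ℤ} (hb : b ≠ 0) (hc : |c| ≤ 1) :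
    (2 * b + c).sign = b.sign := by
  rw [abs_le] at hc
  rcases hb.lt_or_gt with hb | hb
  · rw [sign_eq_neg_one_of_neg hb, sign_eq_neg_one_of_neg (by omega)]
  · rw [sign_eq_one_of_pos hb, sign_eq_one_of_pos (by omega)]

end Int

theorem zakharov_resonant_frequencies_general
    (k₀ : ℤ) (k₂ : ℤ) (ε : ℤ) (hε : ε = 1 ∨ ε = -1)
    (k₁ : ℤ) (hk₁ : k₁ = k₀ + k₂) (hk₁ne : k₁ ≠ 0) :
    k₀ + 2 * k₂ + ε * Int.sign k₀ = 0 ↔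
      (k₀ = 2 * k₁ + ε * Int.sign k₁ ∧ k₂ = -(ε * Int.sign k₁) - k₁) := by
  have hε₁ : |ε| ≤ 1 := by rcases hε with rfl | rfl <;> norm_num
  have sign_eq (s : ℤ) (h : k₀ = 2 * k₁ + ε * s.sign) : k₀.sign = k₁.sign :=
    (congrArg Int.sign h).trans
      (Int.sign_two_mul_add_of_abs_le_one hk₁ne (Int.abs_mul_sign_le_one hε₁ s))
  constructor
  · intro hres
    have hk₀ : k₀ = 2 * k₁ + ε * k₀.sign := by linarith
    rw [sign_eq k₀ hk₀] at hk₀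
    exact ⟨hk₀, by linarith⟩
  · rintro ⟨hk₀, -⟩
    rw [sign_eq k₁ hk₀]
    linarith

/-- **Resonant frequencies of the 1D Zakharov system.**
For `k₀ ≠ 0`, a sign `ε = ±1`, and `k₁ = k₀ + k₂ ≠ 0`, the resonance function
`k₀ + 2k₂ + ε sgn k₀` vanishes exactly when
`k₀ = 2k₁ + ε sgn k₁` and `k₂ = −ε sgn k₁ − k₁`. -/
theorem zakharov_resonant_frequencies
    (k₀ : ℤ) (hk₀ : k₀ ≠ 0) (k₂ : ℤ) (ε : ℤ) (hε : ε = 1 ∨ ε = -1)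
    (k₁ : ℤ) (hk₁ : k₁ = k₀ + k₂) (hk₁ne : k₁ ≠ 0) :
    k₀ + 2 * k₂ + ε * Int.sign k₀ = 0 ↔
      (k₀ = 2 * k₁ + ε * Int.sign k₁ ∧ k₂ = -(ε * Int.sign k₁) - k₁) :=
  zakharov_resonant_frequencies_general k₀ k₂ ε hε k₁ hk₁ hk₁ne
end

section
/- There is an absolute constant C such that the following holds. Let N, L ≥ 1 be dyadic numbers and fix signs ε₁, ε₂ ∈ {+1, −1}. Let f, g ∈ L²(ℤ×ℝ) (with respect to counting measure times Lebesgue measure) be supported respectively in {(k,τ) : |k| ≈ N, |τ + ε₁|k|| ≈ L} and {(k,τ) : |k| ≈ N, |τ + ε₂|k|| ≈ L}. Then the convolution (f∗g)(k,τ) = Σ_{k₁∈ℤ} ∫_ℝ f(k₁,τ₁) g(k−k₁, τ−τ₁) dτ₁ satisfies ‖f∗g‖_{L²(ℤ×ℝ)} ≤ C (LN)^{1/2} ‖f‖_{L²(ℤ×ℝ)} ‖g‖_{L²(ℤ×ℝ)}. -/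
/-!
Young's inequality `‖f ∗ g‖₂ ≤ ‖f‖₂ ‖g‖₁` on the abelian group `ℤ × ℝ`, followed by
Cauchy–Schwarz `‖g‖₁ ≤ |supp g|^{1/2} ‖g‖₂`. The support of `g` lies in
`{|k| < 2N, |τ + ε₂|k|| < 2L}`, a union of at most `4N + 1` intervals of length `4L`, hence of
measure at most `20 L N`. Young's inequality itself is the Schur test: Cauchy–Schwarz at each `p`
against the weight `|g (p - q)|`, then Tonelli and translation invariance.
-/

open MeasureTheory

/-- `N` is a dyadic number `2^j`, `j ∈ ℕ` (so `N ≥ 1`). -/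
def IsDyadic (N : ℝ) : Prop := ∃ j : ℕ, N = 2 ^ j

/-- `|a| ≈ M` for dyadic `M ≥ 1`: it means `M ≤ |a| < 2M`, except that
`|a| ≈ 1` means `|a| < 2`. -/
def DyadNear (M a : ℝ) : Prop := (M = 1 ∧ |a| < 2) ∨ (M ≠ 1 ∧ M ≤ |a| ∧ |a| < 2 * M)

/-- The product measure on `ℤ × ℝ`: counting measure times Lebesgue measure. -/
noncomputable def countProdVolume : Measure (ℤ × ℝ) :=
  Measure.count.prod (volume : Measure ℝ)

/-- Convolution on `ℤ × ℝ`. -/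
noncomputable def zrConv (f g : ℤ × ℝ → ℂ) : ℤ × ℝ → ℂ :=
  fun p => ∑' k₁ : ℤ, ∫ τ₁ : ℝ, f (k₁, τ₁) * g (p.1 - k₁, p.2 - τ₁)

open ENNReal

instance {G H : Type*} [MeasurableSpace G] [MeasurableSpace H] [Neg G] [Neg H] [MeasurableNeg G]
    [MeasurableNeg H] {μ : Measure G} {ν : Measure H} [SFinite μ] [SFinite ν] [μ.IsNegInvariant]
    [ν.IsNegInvariant] : (μ.prod ν).IsNegInvariant := by
  constructor
  rw [Measure.neg_def]
  change Measure.map (Prod.map Neg.neg Neg.neg) _ = _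
  rw [← Measure.map_prod_map _ _ measurable_neg measurable_neg, Measure.map_neg_eq_self,
    Measure.map_neg_eq_self]

instance : countProdVolume.IsAddLeftInvariant := by unfold countProdVolume; infer_instance

instance : countProdVolume.IsNegInvariant := by unfold countProdVolume; infer_instance

instance : SFinite countProdVolume := by unfold countProdVolume; infer_instance

theorem sq_lintegral_mul_le {α : Type*} [MeasurableSpace α] {μ : Measure α} {f w : α → ℝ≥0∞}
    (hf : AEMeasurable f μ) (hw : AEMeasurable w μ) :
    (∫⁻ x, f x * w x ∂μ) ^ 2 ≤ (∫⁻ x, f x ^ 2 * w x ∂μ) * ∫⁻ x, w x ∂μ := by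
  have sq_sqrt (a : ℝ≥0∞) : (a ^ (1 / 2 : ℝ)) ^ 2 = a := by
    rw [← ENNReal.rpow_natCast, ← ENNReal.rpow_mul]; norm_num
  -- Hölder with exponents `(2, 2)` applied to `f √w` and `√w`.
  have holder := ENNReal.lintegral_mul_le_Lp_mul_Lq μ Real.HolderConjugate.two_two
    (hf.mul (hw.pow_const (1 / 2 : ℝ))) (hw.pow_const (1 / 2 : ℝ))
  simp only [Pi.mul_apply, ENNReal.rpow_two, mul_pow, sq_sqrt, mul_assoc, ← sq] at holder
  calc (∫⁻ x, f x * w x ∂μ) ^ 2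
      ≤ ((∫⁻ x, f x ^ 2 * w x ∂μ) ^ (1 / 2 : ℝ) * (∫⁻ x, w x ∂μ) ^ (1 / 2 : ℝ)) ^ 2 :=
        pow_le_pow_left₀ zero_le holder 2
    _ = (∫⁻ x, f x ^ 2 * w x ∂μ) * ∫⁻ x, w x ∂μ := by rw [mul_pow, sq_sqrt, sq_sqrt]

section Young

variable {G : Type*} [MeasurableSpace G] [AddCommGroup G] [MeasurableAdd₂ G] [MeasurableNeg G]
  {μ : Measure G} [SFinite μ] [μ.IsAddLeftInvariant] [μ.IsNegInvariant]

theorem lintegral_sq_lintegral_mul_sub_le {Φ Γ : G → ℝ≥0∞} (hΦ : AEMeasurable Φ μ)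
    (hΓ : AEMeasurable Γ μ) :
    ∫⁻ p, (∫⁻ q, Φ q * Γ (p - q) ∂μ) ^ 2 ∂μ ≤ (∫⁻ q, Φ q ^ 2 ∂μ) * (∫⁻ q, Γ q ∂μ) ^ 2 := by
  have hΓsub : AEMeasurable (fun z : G × G => Γ (z.1 - z.2)) (μ.prod μ) :=
    hΓ.comp_quasiMeasurePreserving (quasiMeasurePreserving_sub μ μ)
  have hweighted : AEMeasurable (Function.uncurry fun p q => Φ q ^ 2 * Γ (p - q)) (μ.prod μ) :=
    (hΦ.comp_quasiMeasurePreserving Measure.quasiMeasurePreserving_snd).pow_const 2 |>.mul hΓsub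
  have pointwise (p : G) : (∫⁻ q, Φ q * Γ (p - q) ∂μ) ^ 2
      ≤ (∫⁻ q, Φ q ^ 2 * Γ (p - q) ∂μ) * ∫⁻ q, Γ q ∂μ := by
    rw [← lintegral_sub_left_eq_self Γ p]
    exact sq_lintegral_mul_le hΦ (hΓ.comp_quasiMeasurePreserving
      (Measure.measurePreserving_sub_left μ p).quasiMeasurePreserving)
  have tonelli : ∫⁻ p, ∫⁻ q, Φ q ^ 2 * Γ (p - q) ∂μ ∂μ
      = (∫⁻ q, Φ q ^ 2 ∂μ) * ∫⁻ q, Γ q ∂μ := by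
    have inner (q : G) : ∫⁻ p, Φ q ^ 2 * Γ (p - q) ∂μ = Φ q ^ 2 * ∫⁻ p, Γ p ∂μ := by
      have hshift : AEMeasurable (fun p => Γ (p - q)) μ :=
        hΓ.comp_quasiMeasurePreserving (measurePreserving_sub_right μ q).quasiMeasurePreserving
      rw [lintegral_const_mul'' _ hshift, lintegral_sub_right_eq_self]
    rw [lintegral_lintegral_swap hweighted, lintegral_congr inner]
    exact lintegral_mul_const'' _ (hΦ.pow_const 2)
  calc ∫⁻ p, (∫⁻ q, Φ q * Γ (p - q) ∂μ) ^ 2 ∂μ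
      ≤ ∫⁻ p, (∫⁻ q, Φ q ^ 2 * Γ (p - q) ∂μ) * ∫⁻ q, Γ q ∂μ ∂μ := lintegral_mono pointwise
    _ = (∫⁻ q, Φ q ^ 2 ∂μ) * (∫⁻ q, Γ q ∂μ) ^ 2 := by
      have : AEMeasurable (fun p => ∫⁻ q, Φ q ^ 2 * Γ (p - q) ∂μ) μ :=
        hweighted.lintegral_prod_right'
      rw [lintegral_mul_const'' _ this, tonelli, mul_assoc, sq]

theorem eLpNorm_lintegral_mul_sub_le {E F : Type*} [TopologicalSpace E] [ContinuousENorm E]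
    [TopologicalSpace F] [ContinuousENorm F] {f : G → E} {g : G → F}
    (hf : AEStronglyMeasurable f μ) (hg : AEStronglyMeasurable g μ) :
    eLpNorm (fun p => ∫⁻ q, ‖f q‖ₑ * ‖g (p - q)‖ₑ ∂μ) 2 μ ≤ eLpNorm f 2 μ * eLpNorm g 1 μ := by
  have young := lintegral_sq_lintegral_mul_sub_le hf.enorm hg.enorm
  simp only [eLpNorm_eq_lintegral_rpow_enorm_toReal two_ne_zero ofNat_ne_top,
    eLpNorm_one_eq_lintegral_enorm, toReal_ofNat, rpow_two, enorm_eq_self]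
  calc _ ≤ ((∫⁻ q, ‖f q‖ₑ ^ 2 ∂μ) * (∫⁻ q, ‖g q‖ₑ ∂μ) ^ 2) ^ (1 / 2 : ℝ) :=
        rpow_le_rpow young (by norm_num)
    _ = _ := by
      rw [mul_rpow_of_nonneg _ _ (by norm_num), ← rpow_natCast, ← rpow_mul]
      norm_num

end Young

theorem eLpNorm_le_eLpNorm_mul_rpow_measure_of_support_subset {α E : Type*} [MeasurableSpace α]
    {μ : Measure α} [TopologicalSpace E] [ENormedAddMonoid E] {f : α → E} {s : Set α}
    {p q : ℝ≥0∞} (hpq : p ≤ q)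
    (hf : AEStronglyMeasurable f μ) (hs : f.support ⊆ s) :
    eLpNorm f p μ ≤ eLpNorm f q μ * μ s ^ (1 / p.toReal - 1 / q.toReal) := by
  rw [← eLpNorm_restrict_eq_of_support_subset hs,
    ← eLpNorm_restrict_eq_of_support_subset (p := q) hs, ← Measure.restrict_apply_univ]
  exact eLpNorm_le_eLpNorm_mul_rpow_measure_univ hpq hf.restrict

theorem countProdVolume_band_le {N L : ℝ} (hN : 1 ≤ N) (hL : 0 ≤ L) (ε : ℝ) :
    countProdVolume {p : ℤ × ℝ | |(p.1 : ℝ)| < 2 * N ∧ |p.2 + ε * (|(p.1 : ℝ)|)| < 2 * L}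
      ≤ ENNReal.ofReal (20 * (L * N)) := by
  set m := ⌊2 * N⌋₊
  set center : ℤ → ℝ := fun k => -(ε * |(k : ℝ)|)
  have hcover : {p : ℤ × ℝ | |(p.1 : ℝ)| < 2 * N ∧ |p.2 + ε * (|(p.1 : ℝ)|)| < 2 * L}
      ⊆ ⋃ k ∈ Finset.Icc (-(m : ℤ)) m, {k} ×ˢ Set.Ioo (center k - 2 * L) (center k + 2 * L) := by
    rintro ⟨k, τ⟩ ⟨hk, hτ⟩
    have hkm : k.natAbs ≤ m := Nat.le_floor (by rw [Nat.cast_natAbs, Int.cast_abs]; exact hk.le)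
    have hτ' := abs_lt.mp hτ
    simp only [Set.mem_iUnion, Set.mem_prod, Set.mem_singleton_iff, Set.mem_Ioo, Finset.mem_Icc]
    exact ⟨k, ⟨by omega, by omega⟩, rfl, by linarith, by linarith⟩
  have hcard : (Finset.Icc (-(m : ℤ)) m).card = 2 * m + 1 := by
    rw [Int.card_Icc]; omega
  have hm : (m : ℝ) ≤ 2 * N := Nat.floor_le (by linarith)
  calc _ ≤ ∑ k ∈ Finset.Icc (-(m : ℤ)) m,
        countProdVolume ({k} ×ˢ Set.Ioo (center k - 2 * L) (center k + 2 * L)) :=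
        (measure_mono hcover).trans (measure_biUnion_finset_le _ _)
    _ = ∑ k ∈ Finset.Icc (-(m : ℤ)) m, ENNReal.ofReal (4 * L) := by
        refine Finset.sum_congr rfl fun k _ => ?_
        rw [countProdVolume, Measure.prod_prod, Measure.count_singleton, Real.volume_Ioo, one_mul]
        ring_nf
    _ = ENNReal.ofReal ((2 * m + 1) * (4 * L)) := by
        rw [Finset.sum_const, hcard, nsmul_eq_mul, ← ENNReal.ofReal_natCast,
          ← ENNReal.ofReal_mul (by positivity)]
        push_cast; rfl
    _ ≤ ENNReal.ofReal (20 * (L * N)) := ENNReal.ofReal_le_ofReal (by nlinarith)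

theorem enorm_zrConv_le {f g : ℤ × ℝ → ℂ} (hf : AEStronglyMeasurable f countProdVolume)
    (hg : AEStronglyMeasurable g countProdVolume) (p : ℤ × ℝ) :
    ‖zrConv f g p‖ₑ ≤ ∫⁻ q, ‖f q‖ₑ * ‖g (p - q)‖ₑ ∂countProdVolume := by
  have hmeas : AEMeasurable (fun q => ‖f q‖ₑ * ‖g (p - q)‖ₑ) countProdVolume :=
    hf.enorm.mul (hg.enorm.comp_quasiMeasurePreserving
      (Measure.measurePreserving_sub_left _ p).quasiMeasurePreserving)
  rw [countProdVolume, lintegral_prod _ hmeas, lintegral_count]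
  calc ‖zrConv f g p‖ₑ ≤ ∑' k, ‖∫ τ, f (k, τ) * g (p.1 - k, p.2 - τ)‖ₑ := enorm_tsum_le_tsum_enorm
    _ ≤ ∑' k, ∫⁻ τ, ‖f (k, τ) * g (p.1 - k, p.2 - τ)‖ₑ :=
        ENNReal.tsum_le_tsum fun k => enorm_integral_le_lintegral_enorm _
    _ = _ := by simp only [enorm_mul]; rfl

theorem IsDyadic.one_le {N : ℝ} (h : IsDyadic N) : 1 ≤ N := by
  obtain ⟨j, rfl⟩ := h
  exact one_le_pow₀ one_le_two

theorem DyadNear.abs_lt {M a : ℝ} (h : DyadNear M a) : |a| < 2 * M := by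
  rcases h with ⟨rfl, h⟩ | ⟨_, _, h⟩
  · linarith
  · exact h

/-- **Bilinear wave-wave convolution bound.** There is an absolute constant `C` such that
for all dyadic `N, L ≥ 1`, signs `ε₁, ε₂ = ±1`, and `f, g ∈ L²(ℤ×ℝ)` supported in
`{|k| ≈ N, |τ + εᵢ|k|| ≈ L}` respectively, one has
`‖f∗g‖_{L²} ≤ C (LN)^{1/2} ‖f‖_{L²} ‖g‖_{L²}`. -/
theorem wave_wave_convolution_L2_bound :
    ∃ C : ℝ, 0 < C ∧
      ∀ (N L : ℝ), IsDyadic N → IsDyadic L →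
      ∀ (ε₁ ε₂ : ℝ), (ε₁ = 1 ∨ ε₁ = -1) → (ε₂ = 1 ∨ ε₂ = -1) →
      ∀ f g : ℤ × ℝ → ℂ,
        MemLp f 2 countProdVolume → MemLp g 2 countProdVolume →
        (∀ p : ℤ × ℝ, f p ≠ 0 → DyadNear N ((p.1 : ℝ)) ∧ DyadNear L (p.2 + ε₁ * |(p.1 : ℝ)|)) →
        (∀ p : ℤ × ℝ, g p ≠ 0 → DyadNear N ((p.1 : ℝ)) ∧ DyadNear L (p.2 + ε₂ * |(p.1 : ℝ)|)) →
        eLpNorm (zrConv f g) 2 countProdVolume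
          ≤ ENNReal.ofReal (C * (L * N) ^ ((1 : ℝ) / 2)) *
              eLpNorm f 2 countProdVolume * eLpNorm g 2 countProdVolume := by
  refine ⟨Real.sqrt 20, by positivity, ?_⟩
  intro N L hN hL ε₁ ε₂ _ _ f g hf hg _ hg_supp
  have hN1 := hN.one_le
  have hL1 := hL.one_le
  set μ := countProdVolume
  set A := {p : ℤ × ℝ | |(p.1 : ℝ)| < 2 * N ∧ |p.2 + ε₂ * (|(p.1 : ℝ)|)| < 2 * L}
  have hgA : g.support ⊆ A := fun p hp => ⟨(hg_supp p hp).1.abs_lt, (hg_supp p hp).2.abs_lt⟩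
  have hA : μ A ^ (1 / 2 : ℝ) ≤ ENNReal.ofReal (Real.sqrt 20 * (L * N) ^ (1 / 2 : ℝ)) :=
    calc μ A ^ (1 / 2 : ℝ) ≤ ENNReal.ofReal (20 * (L * N)) ^ (1 / 2 : ℝ) := by
          gcongr
          exact countProdVolume_band_le hN1 (by linarith) ε₂
      _ = _ := by
          rw [ENNReal.ofReal_rpow_of_nonneg (by positivity) (by norm_num),
            Real.mul_rpow (by norm_num) (by positivity), Real.sqrt_eq_rpow]
  calc eLpNorm (zrConv f g) 2 μ
      ≤ eLpNorm (fun p => ∫⁻ q, ‖f q‖ₑ * ‖g (p - q)‖ₑ ∂μ) 2 μ :=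
        eLpNorm_mono_enorm fun p => (enorm_zrConv_le hf.1 hg.1 p).trans_eq (enorm_eq_self _).symm
    _ ≤ eLpNorm f 2 μ * eLpNorm g 1 μ := eLpNorm_lintegral_mul_sub_le hf.1 hg.1
    _ ≤ eLpNorm f 2 μ * (eLpNorm g 2 μ * μ A ^ (1 / 2 : ℝ)) := by
        gcongr
        have hg_one := eLpNorm_le_eLpNorm_mul_rpow_measure_of_support_subset one_le_two hg.1 hgA
        exact hg_one.trans_eq (by norm_num)
    _ = μ A ^ (1 / 2 : ℝ) * eLpNorm f 2 μ * eLpNorm g 2 μ := by ring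
    _ ≤ _ := by gcongr
end

section
/- There exists a constant C > 0 such that for every u ∈ H¹(𝕋; ℂ) and all n, v ∈ L²(𝕋; ℝ): ‖∂ₓu‖_{L²}² + ½‖n‖_{L²}² + ½‖v‖_{L²}² ≤ 2 E(u, n, v) + C ( ‖u‖_{L²}⁶ + ‖u‖_{L²}⁴ ), where E(u, n, v) = ∫_𝕋 ( |∂ₓu|² + ½n² + ½v² + n|u|² ) dx. In particular, the Hamiltonian energy together with the conserved mass controls the H¹ × L² × L² norm. -/
open Real MeasureTheory intervalIntegral
open Set Filter
open scoped Interval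

/-! Young's inequality absorbs the pairing `∫ n |u|²` into `½‖n‖² + 2‖u‖_{L⁴}⁴`. For the `L⁴`
norm, `|u|²` exceeds its minimum, hence its mean, by at most `∫ |(|u|²)'| ≤ 2∫ |u| |u'|`, so
`‖u‖_{L⁴}⁴ ≤ ‖u‖_∞² ‖u‖²` with `‖u‖_∞² ≤ ‖u‖²/2π + ε‖u'‖² + ε⁻¹‖u‖²`; taking `ε` of order
`1/‖u‖²` leaves at most one copy of `‖u'‖²`, which the kinetic part of the energy pays for. -/

theorem IntervalIntegrable.of_sq {f : ℝ → ℝ} {a b : ℝ} {μ : Measure ℝ} [IsLocallyFiniteMeasure μ]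
    (hf : AEStronglyMeasurable f μ) (hf2 : IntervalIntegrable (fun x => f x ^ 2) μ a b) :
    IntervalIntegrable f μ a b := by
  rw [intervalIntegrable_iff] at hf2 ⊢
  have : IsFiniteMeasure (μ.restrict (Ι a b)) := isFiniteMeasure_restrict.2 measure_Ioc_lt_top.ne
  exact ((memLp_two_iff_integrable_sq hf.restrict).2 hf2).integrable one_le_two

theorem two_mul_mul_le_mul_sq_add_inv_mul_sq {ε : ℝ} (hε : 0 < ε) (p q : ℝ) :
    2 * (p * q) ≤ ε * q ^ 2 + ε⁻¹ * p ^ 2 := by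
  nlinarith [mul_nonneg (inv_nonneg.2 hε.le) (sq_nonneg (ε * q - p)), mul_inv_cancel₀ hε.ne']

theorem two_mul_integral_mul_le {f g : ℝ → ℝ} {a b ε : ℝ} (hab : a ≤ b) (hε : 0 < ε)
    (hfg : IntervalIntegrable (fun x => f x * g x) volume a b)
    (hf : IntervalIntegrable (fun x => f x ^ 2) volume a b)
    (hg : IntervalIntegrable (fun x => g x ^ 2) volume a b) :
    2 * ∫ x in a..b, f x * g x ≤
      ε * (∫ x in a..b, g x ^ 2) + ε⁻¹ * ∫ x in a..b, f x ^ 2 := by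
  rw [← intervalIntegral.integral_const_mul, ← intervalIntegral.integral_const_mul,
    ← intervalIntegral.integral_const_mul, ← integral_add (hg.const_mul ε) (hf.const_mul ε⁻¹)]
  exact integral_mono_on hab (hfg.const_mul 2) ((hg.const_mul ε).add (hf.const_mul ε⁻¹))
    fun x _ => two_mul_mul_le_mul_sq_add_inv_mul_sq hε (f x) (g x)

section GagliardoNirenberg

variable {E : Type*} [NormedAddCommGroup E] [InnerProductSpace ℝ E] {u u' : ℝ → E} {a b : ℝ}

theorem sq_norm_sub_sq_norm_le_integral (hu : ∀ t, HasDerivAt u (u' t) t) (hu' : Continuous u')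
    {x y : ℝ} (hx : x ∈ Icc a b) (hy : y ∈ Icc a b) :
    ‖u x‖ ^ 2 - ‖u y‖ ^ 2 ≤ ∫ t in a..b, 2 * (‖u t‖ * ‖u' t‖) := by
  have hu_cont : Continuous u := continuous_iff_continuousAt.2 fun t => (hu t).continuousAt
  have hderiv : Continuous fun t => 2 * inner ℝ (u t) (u' t) := by fun_prop
  have hbound : Continuous fun t => 2 * (‖u t‖ * ‖u' t‖) := by fun_prop
  calc ‖u x‖ ^ 2 - ‖u y‖ ^ 2 = ∫ t in y..x, 2 * inner ℝ (u t) (u' t) :=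
        (integral_eq_sub_of_hasDerivAt (fun t _ => (hu t).norm_sq)
          (hderiv.intervalIntegrable _ _)).symm
    _ ≤ ∫ t in Ι y x, ‖2 * inner ℝ (u t) (u' t)‖ :=
        (Real.le_norm_self _).trans norm_integral_le_integral_norm_uIoc
    _ ≤ ∫ t in Ι y x, 2 * (‖u t‖ * ‖u' t‖) := by
        refine setIntegral_mono hderiv.norm.integrableOn_uIoc hbound.integrableOn_uIoc
          fun t => ?_
        rw [norm_mul, Real.norm_two]
        gcongr
        exact norm_inner_le_norm _ _
    _ ≤ ∫ t in Ioc a b, 2 * (‖u t‖ * ‖u' t‖) := by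
        refine setIntegral_mono_set hbound.integrableOn_Ioc
          (Eventually.of_forall fun t => by positivity) (Eventually.of_forall ?_)
        exact Ioc_subset_Ioc (le_min hy.1 hx.1) (max_le hy.2 hx.2)
    _ = ∫ t in a..b, 2 * (‖u t‖ * ‖u' t‖) := (integral_of_le (hx.1.trans hx.2)).symm

theorem integral_norm_pow_four_le (hab : a < b) (hu : ∀ t, HasDerivAt u (u' t) t)
    (hu' : Continuous u') {ε : ℝ} (hε : 0 < ε) :
    ∫ t in a..b, ‖u t‖ ^ 4 ≤
      ((∫ t in a..b, ‖u t‖ ^ 2) / (b - a) + ε * (∫ t in a..b, ‖u' t‖ ^ 2)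
        + ε⁻¹ * ∫ t in a..b, ‖u t‖ ^ 2) * ∫ t in a..b, ‖u t‖ ^ 2 := by
  have hu_cont : Continuous u := continuous_iff_continuousAt.2 fun t => (hu t).continuousAt
  set M := ∫ t in a..b, ‖u t‖ ^ 2
  set K := M / (b - a) + ε * (∫ t in a..b, ‖u' t‖ ^ 2) + ε⁻¹ * M
  obtain ⟨y, hy, hy_le⟩ : ∃ y ∈ Ι a b, ‖u y‖ ^ 2 ≤ ⨍ t in a..b, ‖u t‖ ^ 2 :=
    exists_le_setAverage (by simp [sub_eq_zero, hab.ne']) (by simp)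
      (by fun_prop : Continuous fun t => ‖u t‖ ^ 2).integrableOn_uIoc
  rw [interval_average_eq_div] at hy_le
  rw [uIoc_of_le hab.le] at hy
  have hyoung : ∫ t in a..b, 2 * (‖u t‖ * ‖u' t‖) ≤ ε * (∫ t in a..b, ‖u' t‖ ^ 2) + ε⁻¹ * M := by
    rw [intervalIntegral.integral_const_mul]
    exact two_mul_integral_mul_le (f := fun t => ‖u t‖) (g := fun t => ‖u' t‖) hab.le hε
      (Continuous.intervalIntegrable (by fun_prop) _ _)
      (Continuous.intervalIntegrable (by fun_prop) _ _)
      (Continuous.intervalIntegrable (by fun_prop) _ _)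
  have hsup : ∀ x ∈ Icc a b, ‖u x‖ ^ 2 ≤ K := fun x hx => by
    linarith [sq_norm_sub_sq_norm_le_integral hu hu' hx (Ioc_subset_Icc_self hy)]
  calc ∫ t in a..b, ‖u t‖ ^ 4 ≤ ∫ t in a..b, K * ‖u t‖ ^ 2 := by
        refine integral_mono_on hab.le (Continuous.intervalIntegrable (by fun_prop) _ _)
          (Continuous.intervalIntegrable (by fun_prop) _ _) fun x hx => ?_
        rw [show ‖u x‖ ^ 4 = ‖u x‖ ^ 2 * ‖u x‖ ^ 2 by ring]
        exact mul_le_mul_of_nonneg_right (hsup x hx) (by positivity)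
    _ = K * M := intervalIntegral.integral_const_mul K _

theorem two_mul_integral_norm_pow_four_le (hu : ∀ t, HasDerivAt u (u' t) t)
    (hu' : Continuous u') :
    2 * ∫ t in (0 : ℝ)..(2 * π), ‖u t‖ ^ 4 ≤
      (∫ t in (0 : ℝ)..(2 * π), ‖u' t‖ ^ 2) + 5 * ((∫ t in (0 : ℝ)..(2 * π), ‖u t‖ ^ 2) ^ 3
        + (∫ t in (0 : ℝ)..(2 * π), ‖u t‖ ^ 2) ^ 2) := by
  set M := ∫ t in (0 : ℝ)..(2 * π), ‖u t‖ ^ 2 with hM_def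
  set A := ∫ t in (0 : ℝ)..(2 * π), ‖u' t‖ ^ 2
  have hM : 0 ≤ M := integral_nonneg two_pi_pos.le fun t _ => by positivity
  have hA : 0 ≤ A := integral_nonneg two_pi_pos.le fun t _ => by positivity
  -- `ε ≈ 1/(2M)`, shifted so that it stays positive when `M = 0`
  have h := integral_norm_pow_four_le (a := 0) (b := 2 * π) two_pi_pos hu hu'
    (ε := 1 / (2 * (M + 1))) (by positivity)
  rw [sub_zero, one_div, inv_inv, ← hM_def] at h
  have hmean : M / (2 * π) ≤ M / 2 := by
    gcongr
    linarith [pi_gt_three]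
  have hεA : 2 * ((2 * (M + 1))⁻¹ * A) * M ≤ A :=
    calc 2 * ((2 * (M + 1))⁻¹ * A) * M = A * ((2 * (M + 1))⁻¹ * (2 * M)) := by ring
      _ ≤ A * 1 := by
        gcongr
        rw [inv_mul_le_iff₀ (by positivity)]
        linarith
      _ = A := mul_one A
  nlinarith [mul_le_mul_of_nonneg_right hmean hM]

end GagliardoNirenberg

/-- **Energy controls the `H¹ × L² × L²` norm.**
There is a constant `C > 0` such that for every `2π`-periodic `u ∈ H¹(𝕋;ℂ)`
(represented by a continuously differentiable periodic function with derivative `u'`)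
and all `2π`-periodic `n, v ∈ L²(𝕋;ℝ)`:
`‖u'‖² + ½‖n‖² + ½‖v‖² ≤ 2 E(u,n,v) + C (‖u‖_{L²}⁶ + ‖u‖_{L²}⁴)`, where
`E(u,n,v) = ∫_𝕋 (|u'|² + ½n² + ½v² + n|u|²) dx`. -/
theorem zakharov_energy_controls_norm :
    ∃ C : ℝ, 0 < C ∧
      ∀ (u u' : ℝ → ℂ) (n v : ℝ → ℝ),
        (∀ x, u (x + 2 * π) = u x) → (∀ x, u' (x + 2 * π) = u' x) →
        (∀ x, n (x + 2 * π) = n x) → (∀ x, v (x + 2 * π) = v x) →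
        (∀ x, HasDerivAt u (u' x) x) → Continuous u' →
        Measurable n → Measurable v →
        IntervalIntegrable (fun x => n x ^ 2) volume 0 (2 * π) →
        IntervalIntegrable (fun x => v x ^ 2) volume 0 (2 * π) →
        (∫ x in (0 : ℝ)..(2 * π), ‖u' x‖ ^ 2)
            + (1 / 2) * (∫ x in (0 : ℝ)..(2 * π), n x ^ 2)
            + (1 / 2) * (∫ x in (0 : ℝ)..(2 * π), v x ^ 2)
          ≤ 2 * (∫ x in (0 : ℝ)..(2 * π),
                  (‖u' x‖ ^ 2 + (1 / 2) * n x ^ 2 + (1 / 2) * v x ^ 2 + n x * ‖u x‖ ^ 2))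
            + C * ((∫ x in (0 : ℝ)..(2 * π), ‖u x‖ ^ 2) ^ 3
                    + (∫ x in (0 : ℝ)..(2 * π), ‖u x‖ ^ 2) ^ 2) := by
  refine ⟨5, by norm_num, ?_⟩
  intro u u' n v _ _ _ _ hu hu' hn _ hn2 hv2
  have hu_cont : Continuous u := continuous_iff_continuousAt.2 fun x => (hu x).continuousAt
  have hu2 : Continuous fun x => ‖u x‖ ^ 2 := by fun_prop
  have hu'2 : IntervalIntegrable (fun x => ‖u' x‖ ^ 2) volume 0 (2 * π) :=
    Continuous.intervalIntegrable (by fun_prop) _ _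
  have hn_int : IntervalIntegrable n volume 0 (2 * π) := hn2.of_sq hn.aestronglyMeasurable
  have hnu : IntervalIntegrable (fun x => n x * ‖u x‖ ^ 2) volume 0 (2 * π) :=
    hn_int.mul_continuousOn hu2.continuousOn
  have hsplit : (∫ x in (0 : ℝ)..(2 * π),
      (‖u' x‖ ^ 2 + (1 / 2) * n x ^ 2 + (1 / 2) * v x ^ 2 + n x * ‖u x‖ ^ 2))
      = (∫ x in (0 : ℝ)..(2 * π), ‖u' x‖ ^ 2) + (1 / 2) * (∫ x in (0 : ℝ)..(2 * π), n x ^ 2)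
        + (1 / 2) * (∫ x in (0 : ℝ)..(2 * π), v x ^ 2)
        + ∫ x in (0 : ℝ)..(2 * π), n x * ‖u x‖ ^ 2 := by
    rw [integral_add (((hu'2.add (hn2.const_mul _)).add (hv2.const_mul _))) hnu,
      integral_add (hu'2.add (hn2.const_mul _)) (hv2.const_mul _),
      integral_add hu'2 (hn2.const_mul _), intervalIntegral.integral_const_mul,
      intervalIntegral.integral_const_mul]
  have hpairing := two_mul_integral_mul_le (f := fun x => -n x) (g := fun x => ‖u x‖ ^ 2)
    two_pi_pos.le two_pos (hn_int.neg.mul_continuousOn hu2.continuousOn)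
    (by simpa only [neg_sq] using hn2) ((hu2.pow 2).intervalIntegrable _ _)
  simp only [neg_mul, intervalIntegral.integral_neg, neg_sq, ← pow_mul, Nat.reduceMul] at hpairing
  have hv : 0 ≤ ∫ x in (0 : ℝ)..(2 * π), v x ^ 2 :=
    integral_nonneg two_pi_pos.le fun x _ => sq_nonneg _
  linarith [two_mul_integral_norm_pow_four_le hu hu']
end
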